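/- Let P be the kernel of a Wasserstein contractive Markov chain (τ(P) < ∞ and τ(P^m) < 1 for some m) with invariant measure π, and assume E_p(x₀) < ∞ for some x₀ and p ≥ 1. Then for every f in the Banach space L₀ of centred measurable Lipschitz functions, Poisson's equation u - Pu = f has a unique solution u ∈ L₀, and ‖u‖_d ≤ Λ·‖f‖_d, where Λ = ∑_{n=0}^∞ τ(P^n) < ∞. -/

import Mathlib

/-!
The easy half of Kantorovich–Rubinstein duality gives `‖Kg‖_d ≤ τ(K) ‖g‖_d` for the action of a
kernel on Lipschitz functions, so `‖Pⁿf‖_d ≤ τ(P)^(n mod m) τ(Pᵐ)^⌊n/m⌋ ‖f‖_d` decays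
geometrically. Each `Pⁿf` is centred under the invariant measure `π`, hence
`|Pⁿf(x)| ≤ ‖Pⁿf‖_d ∫ d(x, y) dπ(y)`; so the Neumann series `u = ∑ₙ Pⁿf` converges pointwise and
in `L¹` of every probability measure with a finite first moment, which `π` and all `Pⁿ(x)` have
by the eccentricity bound. Summing gives `u - Pu = f`, `π(u) = 0` and `‖u‖_d ≤ ∑ₙ τ(Pⁿ) ‖f‖_d`.
The difference of two solutions is a Lipschitz `P`-harmonic function `w`, so `w = Pᵐw` and
`‖w‖_d ≤ τ(Pᵐ) ‖w‖_d` forces `w` to be constant, hence zero since it is centred.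
-/

open MeasureTheory ProbabilityTheory ENNReal Filter

noncomputable section

/-- `η` is a coupling of `μ` and `ν`. -/
def IsCoupling {X : Type*} [MeasurableSpace X] (η : Measure (X × X)) (μ ν : Measure X) : Prop :=
  η.map Prod.fst = μ ∧ η.map Prod.snd = ν

/-- The 1-Wasserstein distance between two measures, w.r.t. the metric of `X`. -/
def wass {X : Type*} [MeasurableSpace X] [MetricSpace X] (μ ν : Measure X) : ℝ≥0∞ :=
  ⨅ η : {η : Measure (X × X) // IsCoupling η μ ν}, ∫⁻ p, edist p.1 p.2 ∂(η : Measure (X × X))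

/-- The Kantorovich norm of a Markov kernel. -/
def tau {X : Type*} [MeasurableSpace X] [MetricSpace X] (K : Kernel X X) : ℝ≥0∞ :=
  ⨆ (x : X) (y : X) (_ : x ≠ y), wass (K x) (K y) / edist x y

/-- The `p`-eccentricity of `π` at `x₀`. -/
def ecc {X : Type*} [MeasurableSpace X] [MetricSpace X] (π : Measure X) (p : ℝ) (x₀ : X) : ℝ≥0∞ :=
  ∫⁻ y, edist x₀ y ^ p ∂π

/-- The Lipschitz seminorm `‖f‖_d` (valued in `ℝ≥0∞`). -/
def elip {X : Type*} [MetricSpace X] (f : X → ℝ) : ℝ≥0∞ :=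
  ⨆ (x : X) (y : X) (_ : x ≠ y), ENNReal.ofReal |f x - f y| / edist x y

/-- Membership in the Banach space `L₀` of centred measurable Lipschitz functions. -/
def MemL0 {X : Type*} [MeasurableSpace X] [MetricSpace X] (π : Measure X) (f : X → ℝ) : Prop :=
  Measurable f ∧ (∃ L : ℝ, ∀ x y, |f x - f y| ≤ L * dist x y) ∧
    Integrable f π ∧ ∫ x, f x ∂π = 0

/-- Iterates of a Markov kernel. -/
def kpow {X : Type*} [MeasurableSpace X] (P : Kernel X X) : ℕ → Kernel X X
  | 0 => Kernel.id
  | n + 1 => (kpow P n) ∘ₖ P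


section LipschitzSeminorm

variable {X : Type*} [MetricSpace X] {g h : X → ℝ}

lemma elip_le_iff {C : ℝ≥0∞} : elip g ≤ C ↔ ∀ x y, edist (g x) (g y) ≤ C * edist x y := by
  simp only [elip, iSup_le_iff]
  refine forall_congr' fun x => forall_congr' fun y => ?_
  rcases eq_or_ne x y with rfl | hxy
  · simp
  · rw [← Real.dist_eq, ← edist_dist,
      ENNReal.div_le_iff (edist_pos.2 hxy).ne' (edist_ne_top x y)]
    simp [hxy]

lemma lipschitzWith_iff_elip_le {K : NNReal} : LipschitzWith K g ↔ elip g ≤ K :=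
  elip_le_iff.symm

lemma edist_le_elip_mul (g : X → ℝ) (x y : X) : edist (g x) (g y) ≤ elip g * edist x y :=
  elip_le_iff.1 le_rfl x y

lemma elip_ne_top_iff : elip g ≠ ∞ ↔ ∃ L : ℝ, ∀ x y, |g x - g y| ≤ L * dist x y := by
  constructor
  · intro hg
    have hlip : LipschitzWith (elip g).toNNReal g :=
      lipschitzWith_iff_elip_le.2 (coe_toNNReal hg).ge
    exact ⟨_, fun x y => by simpa only [Real.dist_eq] using hlip.dist_le_mul x y⟩
  · rintro ⟨L, hL⟩
    have hlip : LipschitzWith L.toNNReal g :=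
      LipschitzWith.of_dist_le' fun x y => by simpa only [Real.dist_eq] using hL x y
    exact ne_top_of_le_ne_top coe_ne_top (lipschitzWith_iff_elip_le.1 hlip)

lemma elip_sub_ne_top (hg : elip g ≠ ∞) (hh : elip h ≠ ∞) : elip (g - h) ≠ ∞ := by
  have hlip := (lipschitzWith_iff_elip_le.2 (coe_toNNReal hg).ge).sub
    (lipschitzWith_iff_elip_le.2 (coe_toNNReal hh).ge)
  exact ne_top_of_le_ne_top coe_ne_top (lipschitzWith_iff_elip_le.1 hlip)

lemma eq_of_elip_eq_zero (hg : elip g = 0) (x y : X) : g x = g y := by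
  simpa [hg] using edist_le_elip_mul g x y

lemma elip_tsum_le {ι : Type*} {g : ι → X → ℝ} (hg : ∀ x, Summable fun i => g i x) :
    elip (fun x => ∑' i, g i x) ≤ ∑' i, elip (g i) := by
  refine elip_le_iff.2 fun x y => ?_
  calc edist (∑' i, g i x) (∑' i, g i y) = ‖∑' i, (g i x - g i y)‖ₑ := by
        rw [edist_eq_enorm_sub, (hg x).tsum_sub (hg y)]
    _ ≤ ∑' i, edist (g i x) (g i y) := by
        simpa only [edist_eq_enorm_sub] using enorm_tsum_le_tsum_enorm
    _ ≤ ∑' i, elip (g i) * edist x y := ENNReal.tsum_le_tsum fun i => edist_le_elip_mul _ x y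
    _ = (∑' i, elip (g i)) * edist x y := ENNReal.tsum_mul_right

end LipschitzSeminorm

lemma MemL0.sub {X : Type*} [MeasurableSpace X] [MetricSpace X] {π : Measure X}
    {u v : X → ℝ} (hu : MemL0 π u) (hv : MemL0 π v) : MemL0 π (u - v) :=
  ⟨hu.1.sub hv.1,
    elip_ne_top_iff.1 (elip_sub_ne_top (elip_ne_top_iff.2 hu.2.1) (elip_ne_top_iff.2 hv.2.1)),
    hu.2.2.1.sub hv.2.2.1, by
      simp only [Pi.sub_apply]
      rw [integral_sub hu.2.2.1 hv.2.2.1, hu.2.2.2, hv.2.2.2, sub_zero]⟩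

lemma isCoupling_prod {X : Type*} [MeasurableSpace X] (μ ν : Measure X)
    [IsProbabilityMeasure μ] [IsProbabilityMeasure ν] : IsCoupling (μ.prod ν) μ ν :=
  ⟨by rw [Measure.map_fst_prod]; simp, by rw [Measure.map_snd_prod]; simp⟩

section Coupling

variable {X : Type*} [MeasurableSpace X] [MetricSpace X]

lemma IsCoupling.lintegral_le {η : Measure (X × X)} {μ ν : Measure X} (hη : IsCoupling η μ ν)
    {g : X → ℝ≥0∞} (hg : Measurable g) (hlip : ∀ a b, g a ≤ g b + edist a b) :
    ∫⁻ x, g x ∂μ ≤ ∫⁻ x, g x ∂ν + ∫⁻ p, edist p.1 p.2 ∂η := by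
  obtain ⟨rfl, rfl⟩ := hη
  rw [lintegral_map hg measurable_fst, lintegral_map hg measurable_snd,
    ← lintegral_add_left (f := fun p : X × X => g p.2) (hg.comp measurable_snd)]
  exact lintegral_mono fun p => hlip p.1 p.2

lemma lintegral_le_lintegral_add_wass {μ ν : Measure X} {g : X → ℝ≥0∞} (hg : Measurable g)
    (hlip : ∀ a b, g a ≤ g b + edist a b) : ∫⁻ x, g x ∂μ ≤ ∫⁻ x, g x ∂ν + wass μ ν := by
  rw [wass, ENNReal.add_iInf]
  exact le_iInf fun η => η.2.lintegral_le hg hlip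

lemma IsCoupling.edist_integral_le {η : Measure (X × X)} {μ ν : Measure X}
    (hη : IsCoupling η μ ν) {g : X → ℝ} (hg : Measurable g) (hgL : elip g ≠ ∞)
    (hμ : Integrable g μ) (hν : Integrable g ν) :
    edist (∫ x, g x ∂μ) (∫ x, g x ∂ν) ≤ elip g * ∫⁻ p, edist p.1 p.2 ∂η := by
  obtain ⟨rfl, rfl⟩ := hη
  have h₁ : Integrable (fun p : X × X => g p.1) η := hμ.comp_measurable measurable_fst
  have h₂ : Integrable (fun p : X × X => g p.2) η := hν.comp_measurable measurable_snd
  rw [integral_map measurable_fst.aemeasurable hg.aestronglyMeasurable,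
    integral_map measurable_snd.aemeasurable hg.aestronglyMeasurable, edist_eq_enorm_sub,
    ← integral_sub h₁ h₂, ← lintegral_const_mul' _ _ hgL]
  refine (enorm_integral_le_lintegral_enorm _).trans (lintegral_mono fun p => ?_)
  rw [← edist_eq_enorm_sub]
  exact edist_le_elip_mul g p.1 p.2

/-- The easy half of Kantorovich–Rubinstein duality. -/
lemma edist_integral_le_elip_mul_wass {μ ν : Measure X} [IsProbabilityMeasure μ]
    [IsProbabilityMeasure ν] {g : X → ℝ} (hg : Measurable g) (hgL : elip g ≠ ∞)
    (hμ : Integrable g μ) (hν : Integrable g ν) :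
    edist (∫ x, g x ∂μ) (∫ x, g x ∂ν) ≤ elip g * wass μ ν := by
  rw [wass, ENNReal.mul_iInf' (by simp [hgL]) fun _ => ⟨⟨_, isCoupling_prod μ ν⟩⟩]
  exact le_iInf fun η => η.2.edist_integral_le hg hgL hμ hν

end Coupling

section Wasserstein

variable {X : Type*} [MeasurableSpace X] [MetricSpace X] [SecondCountableTopology X]
  [OpensMeasurableSpace X]

lemma wass_self (μ : Measure X) : wass μ μ = 0 := by
  have hdiag : Measurable fun x : X => (x, x) := measurable_id.prodMk measurable_id
  have hcoup : IsCoupling (μ.map fun x => (x, x)) μ μ := by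
    constructor
    · rw [Measure.map_map measurable_fst hdiag]; exact Measure.map_id
    · rw [Measure.map_map measurable_snd hdiag]; exact Measure.map_id
  refine le_antisymm ((iInf_le _ ⟨_, hcoup⟩).trans_eq ?_) zero_le
  simp [lintegral_map measurable_edist hdiag]

lemma wass_le_tau_mul (K : Kernel X X) (x y : X) : wass (K x) (K y) ≤ tau K * edist x y := by
  rcases eq_or_ne x y with rfl | hxy
  · simp [wass_self]
  · exact (ENNReal.div_le_iff (edist_pos.2 hxy).ne' (edist_ne_top x y)).1 <|
      le_iSup_of_le x (le_iSup_of_le y (le_iSup_of_le hxy le_rfl))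

end Wasserstein

section Moments

variable {X : Type*} [MeasurableSpace X] [MetricSpace X] {μ : Measure X} {x₀ : X}

lemma ecc_one (μ : Measure X) (x₀ : X) : ecc μ 1 x₀ = ∫⁻ y, edist x₀ y ∂μ := by
  simp [ecc]

lemma ecc_lt_top_of_le [IsFiniteMeasure μ] {q p : ℝ} (hq : 0 ≤ q) (hqp : q ≤ p)
    (hp : ecc μ p x₀ < ∞) : ecc μ q x₀ < ∞ := by
  have hpow : ∀ y, edist x₀ y ^ q ≤ 1 + edist x₀ y ^ p := fun y => by
    rcases le_total (edist x₀ y) 1 with h | h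
    · exact (ENNReal.rpow_le_one h hq).trans le_self_add
    · exact (ENNReal.rpow_le_rpow_of_exponent_le h hqp).trans le_add_self
  calc ecc μ q x₀ ≤ ∫⁻ y, 1 + edist x₀ y ^ p ∂μ := lintegral_mono hpow
    _ = μ Set.univ + ecc μ p x₀ := by
        rw [lintegral_add_left measurable_const, lintegral_one, ecc]
    _ < ∞ := ENNReal.add_lt_top.2 ⟨measure_lt_top μ _, hp⟩

variable [OpensMeasurableSpace X]

lemma integrable_of_elip_ne_top [IsFiniteMeasure μ] {g : X → ℝ} (hg : Measurable g)
    (hgL : elip g ≠ ∞) (hμ : ecc μ 1 x₀ ≠ ∞) : Integrable g μ := by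
  refine ⟨hg.aestronglyMeasurable, ?_⟩
  have hbound : ∀ y, ‖g y‖ₑ ≤ ‖g x₀‖ₑ + elip g * edist x₀ y := fun y =>
    calc ‖g y‖ₑ = edist (g y) 0 := (edist_zero_right _).symm
      _ ≤ edist (g y) (g x₀) + edist (g x₀) 0 := edist_triangle _ _ _
      _ ≤ ‖g x₀‖ₑ + elip g * edist x₀ y := by
          rw [edist_zero_right, edist_comm, add_comm]
          gcongr
          exact edist_le_elip_mul g x₀ y
  calc ∫⁻ y, ‖g y‖ₑ ∂μ ≤ ∫⁻ y, ‖g x₀‖ₑ + elip g * edist x₀ y ∂μ := lintegral_mono hbound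
    _ = ‖g x₀‖ₑ * μ Set.univ + elip g * ecc μ 1 x₀ := by
        rw [lintegral_add_left measurable_const, lintegral_const,
          lintegral_const_mul _ measurable_edist_right, ecc_one]
    _ < ∞ := by finiteness

variable [SecondCountableTopology X]

lemma ecc_one_le_add_tau_mul (K : Kernel X X) (x y : X) :
    ecc (K x) 1 x₀ ≤ ecc (K y) 1 x₀ + tau K * edist x y := by
  rw [ecc_one, ecc_one]
  refine (lintegral_le_lintegral_add_wass measurable_edist_right fun a b => ?_).trans
    (add_le_add le_rfl (wass_le_tau_mul K x y))
  exact (edist_triangle x₀ b a).trans_eq (by rw [edist_comm b a])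

lemma ecc_one_apply_ne_top {π : Measure X} [NeZero π] {K : Kernel X X} (hinv : π.bind K = π)
    (hπ : ecc π 1 x₀ ≠ ∞) (hK : tau K ≠ ∞) (x : X) : ecc (K x) 1 x₀ ≠ ∞ := by
  have hbind : ∫⁻ y, ecc (K y) 1 x₀ ∂π = ecc π 1 x₀ := by
    simp_rw [ecc_one]
    rw [← Measure.lintegral_bind K.aemeasurable measurable_edist_right.aemeasurable, hinv]
  have hmeas : Measurable fun y => ecc (K y) 1 x₀ := by
    simp_rw [ecc_one]; exact measurable_edist_right.lintegral_kernel
  obtain ⟨y, hy⟩ := (ae_lt_top hmeas (hbind.trans_ne hπ)).exists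
  exact ne_top_of_le_ne_top (by finiteness) (ecc_one_le_add_tau_mul K x y)

end Moments

section MarkovOperator

variable {X : Type*} [MeasurableSpace X]

def markovOp (K : Kernel X X) (g : X → ℝ) : X → ℝ := fun x => ∫ y, g y ∂K x

def poissonSol (P : Kernel X X) (f : X → ℝ) : X → ℝ := fun x => ∑' n, markovOp (kpow P n) f x

lemma kpow_eq_pow (P : Kernel X X) (n : ℕ) : kpow P n = P ^ n := by
  induction n with
  | zero => rfl
  | succ n ih => rw [kpow, ih, pow_succ]; rfl

instance isMarkovKernel_kpow (P : Kernel X X) [IsMarkovKernel P] (n : ℕ) :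
    IsMarkovKernel (kpow P n) := by
  induction n with
  | zero => rw [kpow]; infer_instance
  | succ n ih => rw [kpow]; infer_instance

lemma kpow_add (P : Kernel X X) (a b : ℕ) : kpow P (a + b) = kpow P a ∘ₖ kpow P b := by
  simp only [kpow_eq_pow, pow_add]
  rfl

lemma kpow_one (P : Kernel X X) : kpow P 1 = P := by
  simp [kpow_eq_pow]

lemma invariant_kpow {P : Kernel X X} {π : Measure X} (hinv : π.bind P = π) (n : ℕ) :
    (kpow P n).Invariant π := by
  induction n with
  | zero => exact Measure.id_comp
  | succ n ih => exact ih.comp hinv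

lemma markovOp_kpow_zero [MeasurableSingletonClass X] (P : Kernel X X) (g : X → ℝ) :
    markovOp (kpow P 0) g = g :=
  funext fun x => by simp [markovOp, kpow, Kernel.id_apply]

lemma measurable_markovOp (K : Kernel X X) {g : X → ℝ} (hg : Measurable g) :
    Measurable (markovOp K g) :=
  hg.stronglyMeasurable.integral_kernel.measurable

lemma measurable_poissonSol {P : Kernel X X} {f : X → ℝ} (hf : Measurable f)
    (hsummable : ∀ x, Summable fun n => markovOp (kpow P n) f x) :
    Measurable (poissonSol P f) :=
  measurable_of_tendsto_metrizable
    (fun N => Finset.measurable_sum (Finset.range N) fun _ _ => measurable_markovOp _ hf)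
    (tendsto_pi_nhds.2 fun x => (hsummable x).hasSum.tendsto_sum_nat)

lemma markovOp_comp (K L : Kernel X X) [IsSFiniteKernel K] [IsSFiniteKernel L] {g : X → ℝ}
    (hg : ∀ x, Integrable g ((K ∘ₖ L) x)) :
    markovOp (K ∘ₖ L) g = markovOp L (markovOp K g) :=
  funext fun x => Kernel.integral_comp (hg x)

lemma integral_markovOp {K : Kernel X X} [IsSFiniteKernel K] {π : Measure X} [SFinite π]
    (hinv : K.Invariant π) {g : X → ℝ} (hg : Integrable g π) :
    ∫ x, markovOp K g x ∂π = ∫ x, g x ∂π := by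
  have h := hinv.def ▸ Measure.comp_eq_comp_const_apply (κ := K) (μ := π)
  rw [h] at hg
  conv_rhs => rw [h, Kernel.integral_comp hg]
  rfl

variable [MetricSpace X] [SecondCountableTopology X] [OpensMeasurableSpace X]

lemma elip_markovOp_le (K : Kernel X X) [IsMarkovKernel K] {g : X → ℝ} (hg : Measurable g)
    (hgL : elip g ≠ ∞) (hint : ∀ x, Integrable g (K x)) :
    elip (markovOp K g) ≤ tau K * elip g :=
  elip_le_iff.2 fun x y => calc
    edist (markovOp K g x) (markovOp K g y) ≤ elip g * wass (K x) (K y) :=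
      edist_integral_le_elip_mul_wass hg hgL (hint x) (hint y)
    _ ≤ elip g * (tau K * edist x y) := by gcongr; exact wass_le_tau_mul K x y
    _ = tau K * elip g * edist x y := by ring

end MarkovOperator

lemma tsum_pow_mod_mul_pow_div_ne_top {a b : ℝ≥0∞} (ha : a ≠ ∞) (hb : b < 1) {m : ℕ}
    (hm : 0 < m) : ∑' n, a ^ (n % m) * b ^ (n / m) ≠ ∞ := by
  have : NeZero m := ⟨hm.ne'⟩
  have hdiv : ∀ (q : ℕ) (r : Fin m), (q * m + r) / m = q ∧ (q * m + r) % m = r := fun q r =>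
    ⟨by rw [add_comm, Nat.add_mul_div_right _ _ hm, Nat.div_eq_of_lt r.2, zero_add],
      by rw [add_comm, Nat.add_mul_mod_self_right, Nat.mod_eq_of_lt r.2]⟩
  rw [← (Nat.divModEquiv m).symm.tsum_eq, ENNReal.tsum_prod']
  simp only [Nat.divModEquiv_symm_apply, hdiv, tsum_fintype, ← Finset.sum_mul,
    ENNReal.tsum_mul_left, ENNReal.tsum_geometric]
  exact ENNReal.mul_ne_top (ENNReal.sum_ne_top.2 fun r _ => ENNReal.pow_ne_top ha)
    (ENNReal.inv_ne_top.2 (tsub_pos_of_lt hb).ne')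

section MarkovChain

variable {X : Type*} [MeasurableSpace X] [MetricSpace X] [OpensMeasurableSpace X]
  {P : Kernel X X} [IsMarkovKernel P] {x₀ : X}

lemma markovOp_kpow_add (hmom : ∀ n x, ecc (kpow P n x) 1 x₀ ≠ ∞) {g : X → ℝ}
    (hg : Measurable g) (hgL : elip g ≠ ∞) (a b : ℕ) :
    markovOp (kpow P (a + b)) g = markovOp (kpow P b) (markovOp (kpow P a) g) := by
  have hint : ∀ x, Integrable g (kpow P (a + b) x) := fun x =>
    integrable_of_elip_ne_top hg hgL (hmom _ x)
  rw [kpow_add] at hint ⊢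
  exact markovOp_comp _ _ hint

variable [SecondCountableTopology X]

/-- Finiteness of `τ(Pⁿ)` is not available (submultiplicativity of `τ` needs gluing of
couplings), so finite first moments of `Pⁿ(x)` are propagated through this affine bound. -/
lemma exists_ecc_kpow_le (hP : ecc (P x₀) 1 x₀ ≠ ∞) (hτ : tau P ≠ ∞) (n : ℕ) :
    ∃ A B : ℝ≥0∞, A ≠ ∞ ∧ B ≠ ∞ ∧ ∀ x, ecc (kpow P n x) 1 x₀ ≤ A + B * edist x₀ x := by
  induction n with
  | zero => exact ⟨0, 1, by simp, by simp, fun x => by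
      simp [ecc_one, kpow, Kernel.id_apply, lintegral_dirac]⟩
  | succ n ih =>
    obtain ⟨A, B, hA, hB, hAB⟩ := ih
    refine ⟨A + B * ecc (P x₀) 1 x₀, B * tau P, by finiteness, by finiteness, fun x => ?_⟩
    calc ecc (kpow P (n + 1) x) 1 x₀ = ∫⁻ z, ecc (kpow P n z) 1 x₀ ∂P x := by
          simp_rw [ecc_one]; exact Kernel.lintegral_comp _ _ _ measurable_edist_right
      _ ≤ ∫⁻ z, A + B * edist x₀ z ∂P x := lintegral_mono hAB
      _ = A + B * ecc (P x) 1 x₀ := by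
          rw [lintegral_add_left measurable_const, lintegral_const_mul _ measurable_edist_right,
            ecc_one]
          simp
      _ ≤ A + B * (ecc (P x₀) 1 x₀ + tau P * edist x x₀) := by
          gcongr; exact ecc_one_le_add_tau_mul P x x₀
      _ = A + B * ecc (P x₀) 1 x₀ + B * tau P * edist x₀ x := by
          rw [edist_comm]; ring

lemma ecc_kpow_ne_top (hP : ecc (P x₀) 1 x₀ ≠ ∞) (hτ : tau P ≠ ∞) (n : ℕ) (x : X) :
    ecc (kpow P n x) 1 x₀ ≠ ∞ := by
  obtain ⟨A, B, hA, hB, hAB⟩ := exists_ecc_kpow_le hP hτ n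
  exact ne_top_of_le_ne_top (by finiteness) (hAB x)

lemma elip_markovOp_kpow_add_le (hmom : ∀ n x, ecc (kpow P n x) 1 x₀ ≠ ∞) {g : X → ℝ}
    (hg : Measurable g) (hgL : elip g ≠ ∞) {a : ℕ} (haL : elip (markovOp (kpow P a) g) ≠ ∞)
    (b : ℕ) :
    elip (markovOp (kpow P (a + b)) g) ≤ tau (kpow P b) * elip (markovOp (kpow P a) g) := by
  rw [markovOp_kpow_add hmom hg hgL]
  exact elip_markovOp_le _ (measurable_markovOp _ hg) haL fun x =>
    integrable_of_elip_ne_top (measurable_markovOp _ hg) haL (hmom b x)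

lemma elip_markovOp_kpow_le (hmom : ∀ n x, ecc (kpow P n x) 1 x₀ ≠ ∞) {g : X → ℝ}
    (hg : Measurable g) (hgL : elip g ≠ ∞) (hτ : tau P ≠ ∞) {m : ℕ}
    (hτm : tau (kpow P m) ≠ ∞) (n : ℕ) :
    elip (markovOp (kpow P n) g) ≤ tau P ^ (n % m) * tau (kpow P m) ^ (n / m) * elip g := by
  have hsmall : ∀ r, elip (markovOp (kpow P r) g) ≤ tau P ^ r * elip g := by
    intro r
    induction r with
    | zero => simp [markovOp_kpow_zero]
    | succ r ih =>
      calc elip (markovOp (kpow P (r + 1)) g)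
          ≤ tau (kpow P 1) * elip (markovOp (kpow P r) g) :=
            elip_markovOp_kpow_add_le hmom hg hgL (ne_top_of_le_ne_top (by finiteness) ih) 1
        _ ≤ tau P * (tau P ^ r * elip g) := by rw [kpow_one]; gcongr
        _ = tau P ^ (r + 1) * elip g := by ring
  have hblocks : ∀ r j, elip (markovOp (kpow P (r + m * j)) g) ≤
      tau P ^ r * tau (kpow P m) ^ j * elip g := by
    intro r j
    induction j with
    | zero => simpa using hsmall r
    | succ j ih =>
      calc elip (markovOp (kpow P (r + m * (j + 1))) g)
          ≤ tau (kpow P m) * elip (markovOp (kpow P (r + m * j)) g) := by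
            rw [mul_add_one, ← add_assoc]
            exact elip_markovOp_kpow_add_le hmom hg hgL
              (ne_top_of_le_ne_top (by finiteness) ih) m
        _ ≤ tau (kpow P m) * (tau P ^ r * tau (kpow P m) ^ j * elip g) := by gcongr
        _ = tau P ^ r * tau (kpow P m) ^ (j + 1) * elip g := by ring
  simpa only [Nat.mod_add_div] using hblocks (n % m) (n / m)

lemma elip_markovOp_kpow_le_tau_mul (hmom : ∀ n x, ecc (kpow P n x) 1 x₀ ≠ ∞) {g : X → ℝ}
    (hg : Measurable g) (hgL : elip g ≠ ∞) (n : ℕ) :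
    elip (markovOp (kpow P n) g) ≤ tau (kpow P n) * elip g :=
  elip_markovOp_le _ hg hgL fun x => integrable_of_elip_ne_top hg hgL (hmom n x)

lemma tsum_elip_markovOp_kpow_ne_top (hmom : ∀ n x, ecc (kpow P n x) 1 x₀ ≠ ∞) {g : X → ℝ}
    (hg : Measurable g) (hgL : elip g ≠ ∞) (hτ : tau P ≠ ∞) {m : ℕ} (hm : 0 < m)
    (hcontr : tau (kpow P m) < 1) :
    ∑' n, elip (markovOp (kpow P n) g) ≠ ∞ := by
  refine ne_top_of_le_ne_top
    (ENNReal.mul_ne_top (tsum_pow_mod_mul_pow_div_ne_top hτ hcontr hm) hgL) ?_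
  rw [← ENNReal.tsum_mul_right]
  exact ENNReal.tsum_le_tsum
    (elip_markovOp_kpow_le hmom hg hgL hτ (hcontr.trans ENNReal.one_lt_top).ne)

end MarkovChain

section Poisson

variable {X : Type*} [MeasurableSpace X] [MetricSpace X] [OpensMeasurableSpace X]

lemma enorm_le_elip_mul_of_integral_eq_zero {π : Measure X} [IsProbabilityMeasure π] {x₀ : X}
    {g : X → ℝ} (hg : Integrable g π) (hg0 : ∫ y, g y ∂π = 0) (x : X) :
    ‖g x‖ₑ ≤ elip g * (edist x₀ x + ecc π 1 x₀) := by
  have hgx : g x = ∫ y, (g x - g y) ∂π := by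
    rw [integral_sub (integrable_const _) hg, hg0]; simp
  calc ‖g x‖ₑ = ‖∫ y, (g x - g y) ∂π‖ₑ := by rw [← hgx]
    _ ≤ ∫⁻ y, ‖g x - g y‖ₑ ∂π := enorm_integral_le_lintegral_enorm _
    _ ≤ ∫⁻ y, elip g * (edist x₀ x + edist x₀ y) ∂π := lintegral_mono fun y => by
        rw [← edist_eq_enorm_sub]
        refine (edist_le_elip_mul g x y).trans ?_
        gcongr
        exact edist_triangle_left x y x₀
    _ = elip g * (edist x₀ x + ecc π 1 x₀) := by
        rw [lintegral_const_mul _ (measurable_edist_right.const_add _),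
          lintegral_add_left measurable_const, ecc_one]
        simp

variable {π : Measure X} [IsProbabilityMeasure π] {P : Kernel X X} {x₀ : X} {f : X → ℝ}

lemma elip_ne_top_of_tsum_ne_top (hsum : ∑' n, elip (markovOp (kpow P n) f) ≠ ∞) :
    elip f ≠ ∞ := by
  have h0 := ne_top_of_le_ne_top hsum (ENNReal.le_tsum 0)
  rwa [markovOp_kpow_zero] at h0

variable [IsMarkovKernel P]

lemma enorm_markovOp_kpow_le (hinv : π.bind P = π) (hπ : ecc π 1 x₀ ≠ ∞) (hf : Measurable f)
    (hf0 : ∫ x, f x ∂π = 0) (hsum : ∑' n, elip (markovOp (kpow P n) f) ≠ ∞) (n : ℕ) (x : X) :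
    ‖markovOp (kpow P n) f x‖ₑ ≤ elip (markovOp (kpow P n) f) * (edist x₀ x + ecc π 1 x₀) := by
  have hnL := ne_top_of_le_ne_top hsum (ENNReal.le_tsum n)
  have hfπ := integrable_of_elip_ne_top hf (elip_ne_top_of_tsum_ne_top hsum) hπ
  refine enorm_le_elip_mul_of_integral_eq_zero
    (integrable_of_elip_ne_top (measurable_markovOp _ hf) hnL hπ) ?_ x
  rw [integral_markovOp (invariant_kpow hinv n) hfπ, hf0]

lemma tsum_enorm_markovOp_kpow_le (hinv : π.bind P = π) (hπ : ecc π 1 x₀ ≠ ∞)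
    (hf : Measurable f) (hf0 : ∫ x, f x ∂π = 0)
    (hsum : ∑' n, elip (markovOp (kpow P n) f) ≠ ∞) (x : X) :
    ∑' n, ‖markovOp (kpow P n) f x‖ₑ ≤
      (∑' n, elip (markovOp (kpow P n) f)) * (edist x₀ x + ecc π 1 x₀) :=
  (ENNReal.tsum_le_tsum (enorm_markovOp_kpow_le hinv hπ hf hf0 hsum · x)).trans_eq
    ENNReal.tsum_mul_right

lemma summable_markovOp_kpow (hinv : π.bind P = π) (hπ : ecc π 1 x₀ ≠ ∞) (hf : Measurable f)
    (hf0 : ∫ x, f x ∂π = 0) (hsum : ∑' n, elip (markovOp (kpow P n) f) ≠ ∞) (x : X) :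
    Summable fun n => markovOp (kpow P n) f x :=
  .of_enorm <| ne_top_of_le_ne_top (by finiteness)
    (tsum_enorm_markovOp_kpow_le hinv hπ hf hf0 hsum x)

lemma integral_poissonSol {μ : Measure X} [IsProbabilityMeasure μ] (hμ : ecc μ 1 x₀ ≠ ∞)
    (hinv : π.bind P = π) (hπ : ecc π 1 x₀ ≠ ∞) (hf : Measurable f) (hf0 : ∫ x, f x ∂π = 0)
    (hsum : ∑' n, elip (markovOp (kpow P n) f) ≠ ∞) :
    ∫ x, poissonSol P f x ∂μ = ∑' n, ∫ x, markovOp (kpow P n) f x ∂μ := by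
  refine integral_tsum (fun n => (measurable_markovOp _ hf).aestronglyMeasurable) ?_
  rw [← lintegral_tsum fun n => (measurable_markovOp _ hf).enorm.aemeasurable]
  refine ne_top_of_le_ne_top ?_
    (lintegral_mono (tsum_enorm_markovOp_kpow_le hinv hπ hf hf0 hsum))
  rw [lintegral_const_mul _ (measurable_edist_right.add_const _),
    lintegral_add_right _ measurable_const, ← ecc_one, lintegral_const, measure_univ, mul_one]
  exact ENNReal.mul_ne_top hsum (ENNReal.add_ne_top.2 ⟨hμ, hπ⟩)

lemma memL0_poissonSol (hinv : π.bind P = π) (hπ : ecc π 1 x₀ ≠ ∞) (hf : Measurable f)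
    (hf0 : ∫ x, f x ∂π = 0) (hsum : ∑' n, elip (markovOp (kpow P n) f) ≠ ∞) :
    MemL0 π (poissonSol P f) := by
  have hsummable := summable_markovOp_kpow hinv hπ hf hf0 hsum
  have hmeas := measurable_poissonSol hf hsummable
  have hL : elip (poissonSol P f) ≠ ∞ := ne_top_of_le_ne_top hsum (elip_tsum_le hsummable)
  have hfπ := integrable_of_elip_ne_top hf (elip_ne_top_of_tsum_ne_top hsum) hπ
  refine ⟨hmeas, elip_ne_top_iff.1 hL, integrable_of_elip_ne_top hmeas hL hπ, ?_⟩
  simp [integral_poissonSol hπ hinv hπ hf hf0 hsum, integral_markovOp (invariant_kpow hinv _) hfπ,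
    hf0]

lemma poissonSol_sub_markovOp (hmom : ∀ n x, ecc (kpow P n x) 1 x₀ ≠ ∞) (hinv : π.bind P = π)
    (hπ : ecc π 1 x₀ ≠ ∞) (hf : Measurable f) (hf0 : ∫ x, f x ∂π = 0)
    (hsum : ∑' n, elip (markovOp (kpow P n) f) ≠ ∞) (x : X) :
    poissonSol P f x - markovOp P (poissonSol P f) x = f x := by
  have hfL := elip_ne_top_of_tsum_ne_top hsum
  have hstep : ∀ n, ∫ y, markovOp (kpow P n) f y ∂P x = markovOp (kpow P (n + 1)) f x :=
    fun n => by rw [markovOp_kpow_add hmom hf hfL n 1, kpow_one]; rfl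
  have hPx : ecc (P x) 1 x₀ ≠ ∞ := kpow_one P ▸ hmom 1 x
  rw [markovOp, integral_poissonSol hPx hinv hπ hf hf0 hsum, tsum_congr hstep, poissonSol,
    (summable_markovOp_kpow hinv hπ hf hf0 hsum x).tsum_eq_zero_add, add_sub_cancel_right,
    markovOp_kpow_zero]

variable [SecondCountableTopology X]

lemma elip_poissonSol_le (hmom : ∀ n x, ecc (kpow P n x) 1 x₀ ≠ ∞) (hinv : π.bind P = π)
    (hπ : ecc π 1 x₀ ≠ ∞) (hf : Measurable f) (hf0 : ∫ x, f x ∂π = 0)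
    (hsum : ∑' n, elip (markovOp (kpow P n) f) ≠ ∞) :
    elip (poissonSol P f) ≤ (∑' n, tau (kpow P n)) * elip f :=
  calc elip (poissonSol P f) ≤ ∑' n, elip (markovOp (kpow P n) f) :=
        elip_tsum_le (summable_markovOp_kpow hinv hπ hf hf0 hsum)
    _ ≤ ∑' n, tau (kpow P n) * elip f :=
        ENNReal.tsum_le_tsum (elip_markovOp_kpow_le_tau_mul hmom hf
          (elip_ne_top_of_tsum_ne_top hsum))
    _ = (∑' n, tau (kpow P n)) * elip f := ENNReal.tsum_mul_right

lemma markovOp_kpow_eq_self (hmom : ∀ n x, ecc (kpow P n x) 1 x₀ ≠ ∞) {w : X → ℝ}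
    (hw : Measurable w) (hwL : elip w ≠ ∞) (hharm : markovOp P w = w) (n : ℕ) :
    markovOp (kpow P n) w = w := by
  induction n with
  | zero => exact markovOp_kpow_zero P w
  | succ n ih => rw [markovOp_kpow_add hmom hw hwL n 1, ih, kpow_one, hharm]

lemma elip_eq_zero_of_markovOp_eq_self (hmom : ∀ n x, ecc (kpow P n x) 1 x₀ ≠ ∞) {m : ℕ}
    (hcontr : tau (kpow P m) < 1) {w : X → ℝ} (hw : Measurable w) (hwL : elip w ≠ ∞)
    (hharm : markovOp P w = w) : elip w = 0 := by
  have hle : elip w ≤ elip w * tau (kpow P m) := by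
    have h := elip_markovOp_kpow_le_tau_mul hmom hw hwL m
    rwa [markovOp_kpow_eq_self hmom hw hwL hharm, mul_comm] at h
  by_contra h0
  exact (hle.trans_lt (by simpa using ENNReal.mul_lt_mul_right h0 hwL hcontr)).false

lemma eq_of_sub_markovOp_eq (hmom : ∀ n x, ecc (kpow P n x) 1 x₀ ≠ ∞) {m : ℕ}
    (hcontr : tau (kpow P m) < 1) {u v : X → ℝ} (hu : MemL0 π u) (hv : MemL0 π v)
    (huf : ∀ x, u x - markovOp P u x = f x) (hvf : ∀ x, v x - markovOp P v x = f x) :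
    v = u := by
  obtain ⟨hw, hwLip, -, hw0⟩ := hv.sub hu
  have hint : ∀ {g : X → ℝ}, MemL0 π g → ∀ x, Integrable g (P x) := fun hg x =>
    integrable_of_elip_ne_top hg.1 (elip_ne_top_iff.2 hg.2.1) (kpow_one P ▸ hmom 1 x)
  have hharm : markovOp P (v - u) = v - u := funext fun x => by
    have hsub := integral_sub (hint hv x) (hint hu x)
    simp only [markovOp, Pi.sub_apply] at huf hvf ⊢
    linarith [huf x, hvf x]
  have hconst := eq_of_elip_eq_zero
    (elip_eq_zero_of_markovOp_eq_self hmom hcontr hw (elip_ne_top_iff.2 hwLip) hharm)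
  funext x
  have hwx : ∫ y, (v - u) y ∂π = (v - u) x := by
    rw [integral_congr_ae (Eventually.of_forall fun y => hconst y x)]
    simp
  rw [hw0] at hwx
  exact sub_eq_zero.1 hwx.symm

end Poisson

/-- for a Wasserstein contractive kernel `P` with invariant measure `π`
and finite eccentricity, Poisson's equation `u - Pu = f` has a unique solution `u ∈ L₀`
for every `f ∈ L₀`, and `‖u‖_d ≤ Λ ‖f‖_d` with `Λ = ∑ₙ τ(Pⁿ)`. -/
theorem poisson_solution_lipschitz {X : Type*} [MeasurableSpace X] [MetricSpace X]
    [PolishSpace X] [BorelSpace X]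
    (π : Measure X) [IsProbabilityMeasure π]
    (P : Kernel X X) [IsMarkovKernel P] (hinv : π.bind P = π)
    (htau : tau P < ∞) (m : ℕ) (hm : 0 < m) (hcontr : tau (kpow P m) < 1)
    (p : ℝ) (hp : 1 ≤ p) (x₀ : X) (hE : ecc π p x₀ < ∞)
    (f : X → ℝ) (hf : MemL0 π f) :
    ∃ u : X → ℝ,
      (MemL0 π u ∧ ∀ x, u x - ∫ y, u y ∂(P x) = f x) ∧
      elip u ≤ (∑' n : ℕ, tau (kpow P n)) * elip f ∧
      ∀ v : X → ℝ, (MemL0 π v ∧ ∀ x, v x - ∫ y, v y ∂(P x) = f x) → v = u := by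
  obtain ⟨hfm, hfLip, -, hf0⟩ := hf
  have hπ : ecc π 1 x₀ ≠ ∞ := (ecc_lt_top_of_le zero_le_one hp hE).ne
  have hmom := ecc_kpow_ne_top (ecc_one_apply_ne_top hinv hπ htau.ne x₀) htau.ne
  have hsum := tsum_elip_markovOp_kpow_ne_top hmom hfm (elip_ne_top_iff.2 hfLip) htau.ne hm
    hcontr
  have hsol := poissonSol_sub_markovOp hmom hinv hπ hfm hf0 hsum
  have hmem := memL0_poissonSol hinv hπ hfm hf0 hsum
  exact ⟨poissonSol P f, ⟨hmem, hsol⟩, elip_poissonSol_le hmom hinv hπ hfm hf0 hsum,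
    fun v ⟨hv, hvf⟩ => eq_of_sub_markovOp_eq hmom hcontr hmem hv hsol hvf⟩
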